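/- arXiv:1908.02413 — 8 statements merged into one kernel-verified Lean document; each statement's English description precedes it below -/
import Mathlib

section
/- The map mH1 given by u₂ = v + t(p−q)/(s−t), s₂ = 1/t + (p−q)/(t(u−v)), v₁ = u + s(p−q)/(s−t), t₁ = 1/s + (p−q)/(s(u−v)) satisfies the invariance condition s₂/t₁ = s/t, provided s ≠ t, u ≠ v, s ≠ 0, t ≠ 0 and t₁ ≠ 0. -/
theorem one_div_add_div_mul_eq {K : Type*} [Field K] (x a c : K) :
    1 / a + x / (a * c) = (1 + x / c) / a := by
  ring

theorem stmt2_general {K : Type*} [Field K] (p q u s v t : K)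
    (s₂ t₁ : K)
    (hs₂ : s₂ = 1 / t + (p - q) / (t * (u - v)))
    (ht₁ : t₁ = 1 / s + (p - q) / (s * (u - v)))
    (ht₁0 : t₁ ≠ 0) :
    s₂ / t₁ = s / t := by
  rw [one_div_add_div_mul_eq] at hs₂ ht₁
  subst hs₂ ht₁
  exact div_div_div_cancel_left' t s (div_ne_zero_iff.mp ht₁0).1

/-- The mH1 map satisfies the invariance condition s₂/t₁ = s/t. -/
theorem stmt2 {K : Type*} [Field K] (p q u s v t : K)
    (hst : s ≠ t) (huv : u ≠ v) (hs : s ≠ 0) (ht : t ≠ 0)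
    (u₂ s₂ v₁ t₁ : K)
    (hu₂ : u₂ = v + t * (p - q) / (s - t))
    (hs₂ : s₂ = 1 / t + (p - q) / (t * (u - v)))
    (hv₁ : v₁ = u + s * (p - q) / (s - t))
    (ht₁ : t₁ = 1 / s + (p - q) / (s * (u - v)))
    (ht₁0 : t₁ ≠ 0) :
    s₂ / t₁ = s / t :=
  stmt2_general p q u s v t s₂ t₁ hs₂ ht₁ ht₁0
end

section
/- The multi-dimensional system X^i_j = X^j + Y^j(p^i−p^j)/(Y^i−Y^j), Y^i_j = (1/Y^j)(1 + (p^i−p^j)/(X^i−X^j)) is 3-dimensionally compatible: applying the shift in direction k to X^1_2 gives the same result as applying the shift in direction 2 to X^1_3, i.e. X^1_{23} = X^1_{32}, for generic initial data (X^1,Y^1,X^2,Y^2,X^3,Y^3) and parameters p^1,p^2,p^3. -/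
/-!
Both sides split into a first shift `X^3_2` (resp. `X^2_3`) and a correction coming from the
second shift. The first shifts differ only by the constant `(X^2 - X^3) + (p^2 - p^3)`: the
`Y`-dependence cancels. In the correction, the common factor `1 / Y^j` of `Y^1_j` and `Y^k_j`
cancels as well, leaving a rational function of the `X^i` and `p^i` whose denominator is twice
the signed area of the triangle with vertices `(p^i, X^i)`. That area changes sign under the
swap `2 ↔ 3`, and the two corrections then differ by exactly the constant above.
-/

section

variable {K : Type*} [Field K]

-- `X^i_j`
def shiftX (Xj Yi Yj pi pj : K) : K := Xj + Yj * (pi - pj) / (Yi - Yj)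

-- `Y^i_j`
def shiftY (Xi Xj Yj pi pj : K) : K := 1 / Yj * (1 + (pi - pj) / (Xi - Xj))

def signedArea (pi Xi pj Xj pk Xk : K) : K := (pi - pj) * (Xk - Xj) - (pk - pj) * (Xi - Xj)

theorem signedArea_swap (pi Xi pj Xj pk Xk : K) :
    signedArea pi Xi pk Xk pj Xj = -signedArea pi Xi pj Xj pk Xk := by
  unfold signedArea
  ring

theorem shiftX_eq_shiftX_swap_add {Yi Yj : K} (Xi Xj pi pj : K) (hY : Yi - Yj ≠ 0) :
    shiftX Xj Yi Yj pi pj = shiftX Xi Yj Yi pj pi + (Xj - Xi) + (pj - pi) := by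
  have hY' : Yj - Yi ≠ 0 := sub_ne_zero.2 (sub_ne_zero.1 hY).symm
  unfold shiftX
  field_simp
  ring

theorem shiftY_sub_shiftY {Xi Xj Xk : K} (Yj pi pj pk : K) (hij : Xi - Xj ≠ 0)
    (hkj : Xk - Xj ≠ 0) :
    shiftY Xi Xj Yj pi pj - shiftY Xk Xj Yj pk pj
      = signedArea pi Xi pj Xj pk Xk / (Yj * (Xi - Xj) * (Xk - Xj)) := by
  unfold shiftY signedArea
  field_simp
  ring

theorem shiftX_shiftY_shiftY {Xi Xj Xk Yj : K} (Z pi pj pk : K) (hY : Yj ≠ 0)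
    (hij : Xi - Xj ≠ 0) (hkj : Xk - Xj ≠ 0) :
    shiftX Z (shiftY Xi Xj Yj pi pj) (shiftY Xk Xj Yj pk pj) pi pk
      = Z + (Xk - Xj + (pk - pj)) * (pi - pk) * (Xi - Xj) / signedArea pi Xi pj Xj pk Xk := by
  rw [shiftX, shiftY_sub_shiftY Yj pi pj pk hij hkj, div_div_eq_mul_div, shiftY]
  congr 1
  field_simp

end

theorem stmt5_general {K : Type*} [Field K]
    (X1 X2 X3 Y2 Y3 p1 p2 p3 : K)
    (hY2 : Y2 ≠ 0) (hY3 : Y3 ≠ 0)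
    (hY23 : Y2 - Y3 ≠ 0)
    (hX12 : X1 - X2 ≠ 0) (hX13 : X1 - X3 ≠ 0) (hX23 : X2 - X3 ≠ 0)
    -- shifted quantities
    (X3s2 Y3s2 Y1s2 X2s3 Y2s3 Y1s3 : K)
    (hX3s2 : X3s2 = X2 + Y2 * (p3 - p2) / (Y3 - Y2))
    (hY3s2 : Y3s2 = (1 / Y2) * (1 + (p3 - p2) / (X3 - X2)))
    (hY1s2 : Y1s2 = (1 / Y2) * (1 + (p1 - p2) / (X1 - X2)))
    (hX2s3 : X2s3 = X3 + Y3 * (p2 - p3) / (Y2 - Y3))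
    (hY2s3 : Y2s3 = (1 / Y3) * (1 + (p2 - p3) / (X2 - X3)))
    (hY1s3 : Y1s3 = (1 / Y3) * (1 + (p1 - p3) / (X1 - X3)))
    (hden1 : Y1s2 - Y3s2 ≠ 0) :
    X3s2 + Y3s2 * (p1 - p3) / (Y1s2 - Y3s2)
      = X2s3 + Y2s3 * (p1 - p2) / (Y1s3 - Y2s3) := by
  subst hX3s2 hY3s2 hY1s2 hX2s3 hY2s3 hY1s3
  have hX32 : X3 - X2 ≠ 0 := sub_ne_zero.2 (sub_ne_zero.1 hX23).symm
  have hArea : signedArea p1 X1 p2 X2 p3 X3 ≠ 0 := by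
    have h := hden1
    rw [← shiftY, ← shiftY, shiftY_sub_shiftY Y2 p1 p2 p3 hX12 hX32] at h
    exact (div_ne_zero_iff.mp h).1
  change shiftX (shiftX X2 Y3 Y2 p3 p2) (shiftY X1 X2 Y2 p1 p2) (shiftY X3 X2 Y2 p3 p2) p1 p3
    = shiftX (shiftX X3 Y2 Y3 p2 p3) (shiftY X1 X3 Y3 p1 p3) (shiftY X2 X3 Y3 p2 p3) p1 p2
  rw [shiftX_shiftY_shiftY _ p1 p2 p3 hY2 hX12 hX32, shiftX_shiftY_shiftY _ p1 p3 p2 hY3 hX13 hX23,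
    shiftX_eq_shiftX_swap_add X3 X2 p3 p2 (sub_ne_zero.2 (sub_ne_zero.1 hY23).symm),
    signedArea_swap p1 X1 p2 X2 p3 X3, add_assoc, add_assoc]
  congr 1
  field_simp
  unfold signedArea
  ring

/-- 3-dimensional compatibility of the mH1 multi-dimensional system:
X^1_{23} = X^1_{32} for generic data. -/
theorem stmt5 {K : Type*} [Field K]
    (X1 X2 X3 Y1 Y2 Y3 p1 p2 p3 : K)
    (hY1 : Y1 ≠ 0) (hY2 : Y2 ≠ 0) (hY3 : Y3 ≠ 0)
    (hY12 : Y1 - Y2 ≠ 0) (hY13 : Y1 - Y3 ≠ 0) (hY23 : Y2 - Y3 ≠ 0)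
    (hX12 : X1 - X2 ≠ 0) (hX13 : X1 - X3 ≠ 0) (hX23 : X2 - X3 ≠ 0)
    -- shifted quantities
    (X3s2 Y3s2 Y1s2 X2s3 Y2s3 Y1s3 : K)
    (hX3s2 : X3s2 = X2 + Y2 * (p3 - p2) / (Y3 - Y2))
    (hY3s2 : Y3s2 = (1 / Y2) * (1 + (p3 - p2) / (X3 - X2)))
    (hY1s2 : Y1s2 = (1 / Y2) * (1 + (p1 - p2) / (X1 - X2)))
    (hX2s3 : X2s3 = X3 + Y3 * (p2 - p3) / (Y2 - Y3))
    (hY2s3 : Y2s3 = (1 / Y3) * (1 + (p2 - p3) / (X2 - X3)))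
    (hY1s3 : Y1s3 = (1 / Y3) * (1 + (p1 - p3) / (X1 - X3)))
    (hden1 : Y1s2 - Y3s2 ≠ 0) (hden2 : Y1s3 - Y2s3 ≠ 0) :
    X3s2 + Y3s2 * (p1 - p3) / (Y1s2 - Y3s2)
      = X2s3 + Y2s3 * (p1 - p2) / (Y1s3 - Y2s3) :=
  stmt5_general X1 X2 X3 Y2 Y3 p1 p2 p3 hY2 hY3 hY23 hX12 hX13 hX23 X3s2 Y3s2 Y1s2 X2s3 Y2s3 Y1s3
    hX3s2 hY3s2 hY1s2 hX2s3 hY2s3 hY1s3 hden1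
end

section
/- The closed-form expression X^1_{23} = (1/(χ²³ψ²³))·(X^1ψ²³(χ²³+π²³) − π²³(X^3Y^2 − X^2Y^3) − π²³χ¹²χ¹³ψ²³(χ²³+π²³)/(π²³X^1 − p^1χ²³ + p^3X^2 − p^2X^3)), where χ^{lm} = X^l − X^m, ψ^{lm} = Y^l − Y^m, π^{lm} = p^l − p^m, is symmetric under interchanging the indices 2 and 3. -/
/-- The closed-form expression for X^1_{23}. -/
noncomputable def Xexpr {K : Type*} [Field K]
    (X1 X2 X3 Y2 Y3 p1 p2 p3 : K) : K :=
  (1 / ((X2 - X3) * (Y2 - Y3))) *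
    (X1 * (Y2 - Y3) * ((X2 - X3) + (p2 - p3))
      - (p2 - p3) * (X3 * Y2 - X2 * Y3)
      - (p2 - p3) * (X1 - X2) * (X1 - X3) * (Y2 - Y3) * ((X2 - X3) + (p2 - p3))
          / ((p2 - p3) * X1 - p1 * (X2 - X3) + p3 * X2 - p2 * X3))

theorem stmt6_general {K : Type*} [Field K]
    (X1 X2 X3 Y2 Y3 p1 p2 p3 : K) :
    Xexpr X1 X2 X3 Y2 Y3 p1 p2 p3 = Xexpr X1 X3 X2 Y3 Y2 p1 p3 p2 := by
  -- The swap negates χ²³, ψ²³, π²³ and the last denominator, and every term of `Xexpr` has an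
  -- even number of these factors.
  have denominator_swap : (p3 - p2) * X1 - p1 * (X3 - X2) + p2 * X3 - p3 * X2
      = -((p2 - p3) * X1 - p1 * (X2 - X3) + p3 * X2 - p2 * X3) := by ring
  unfold Xexpr
  rw [denominator_swap, ← neg_sub X2 X3, ← neg_sub Y2 Y3, ← neg_sub p2 p3, neg_mul_neg, div_neg]
  ring

/-- The closed-form expression for X^1_{23} is symmetric under interchanging
the indices 2 and 3. -/
theorem stmt6 {K : Type*} [Field K]
    (X1 X2 X3 Y2 Y3 p1 p2 p3 : K)
    (hX : X2 - X3 ≠ 0) (hY : Y2 - Y3 ≠ 0)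
    (hD : (p2 - p3) * X1 - p1 * (X2 - X3) + p3 * X2 - p2 * X3 ≠ 0)
    (hD' : (p3 - p2) * X1 - p1 * (X3 - X2) + p2 * X3 - p3 * X2 ≠ 0) :
    Xexpr X1 X2 X3 Y2 Y3 p1 p2 p3 = Xexpr X1 X3 X2 Y3 Y2 p1 p3 p2 :=
  stmt6_general X1 X2 X3 Y2 Y3 p1 p2 p3
end

section
/- If (x, x₁, x₂, x₁₂) solves H1, i.e. (x − x₁₂)(x₁ − x₂) + p − q = 0, and u = x₁x, v = x₂x, s = x₁/x, t = x₂/x, u₂ = x₁₂x₂, v₁ = x₁₂x₁, s₂ = x₁₂/x₂, t₁ = x₁₂/x₁, then (u,s,v,t,u₂,s₂,v₁,t₁) satisfies the mH1 system: u₂ = v + t(p−q)/(s−t), s₂ = 1/t + (p−q)/(t(u−v)), v₁ = u + s(p−q)/(s−t), t₁ = 1/s + (p−q)/(s(u−v)). -/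
/-!
Solving H1 for the shifted value gives `x₁₂ = x + (p - q) / (x₁ - x₂)`. The mH1 variables
`s, t` and `u, v` are `x₁, x₂` divided and multiplied by `x`, so `x` cancels from
`t / (s - t)` and `t * (u - v)`, and the equations for `u₂, s₂` become identities in `x₁₂`.
The equations for `v₁, t₁` follow by the symmetry `(x₁, p) ↔ (x₂, q)` of H1.
-/

namespace H1

variable {K : Type*} [Field K] {p q x x₁ x₂ x₁₂ : K}

theorem symm (h : (x - x₁₂) * (x₁ - x₂) + p - q = 0) :
    (x - x₁₂) * (x₂ - x₁) + q - p = 0 := by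
  linear_combination -h

theorem x₁₂_eq (hx12 : x₁ ≠ x₂) (h : (x - x₁₂) * (x₁ - x₂) + p - q = 0) :
    x₁₂ = x + (p - q) / (x₁ - x₂) := by
  rw [← sub_eq_iff_eq_add', eq_div_iff (sub_ne_zero.mpr hx12)]
  linear_combination -h

theorem x₁₂_mul_x₂_eq (hx : x ≠ 0) (hx12 : x₁ ≠ x₂) (h : (x - x₁₂) * (x₁ - x₂) + p - q = 0) :
    x₁₂ * x₂ = x₂ * x + x₂ / x * (p - q) / (x₁ / x - x₂ / x) := by
  have hx12' : x₁ - x₂ ≠ 0 := sub_ne_zero.mpr hx12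
  rw [x₁₂_eq hx12 h]
  field_simp

theorem x₁₂_div_x₂_eq (hx : x ≠ 0) (hx12 : x₁ ≠ x₂) (h : (x - x₁₂) * (x₁ - x₂) + p - q = 0) :
    x₁₂ / x₂ = 1 / (x₂ / x) + (p - q) / (x₂ / x * (x₁ * x - x₂ * x)) := by
  have hx12' : x₁ - x₂ ≠ 0 := sub_ne_zero.mpr hx12
  rw [x₁₂_eq hx12 h]
  field_simp

end H1

theorem stmt8_general {K : Type*} [Field K] (p q x x₁ x₂ x₁₂ : K)
    (hx : x ≠ 0)
    (hx12 : x₁ ≠ x₂)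
    (hH1 : (x - x₁₂) * (x₁ - x₂) + p - q = 0)
    (u v s t u₂ v₁ s₂ t₁ : K)
    (hu : u = x₁ * x) (hv : v = x₂ * x) (hs : s = x₁ / x) (ht : t = x₂ / x)
    (hu₂ : u₂ = x₁₂ * x₂) (hv₁ : v₁ = x₁₂ * x₁)
    (hs₂ : s₂ = x₁₂ / x₂) (ht₁ : t₁ = x₁₂ / x₁) :
    u₂ = v + t * (p - q) / (s - t) ∧
    s₂ = 1 / t + (p - q) / (t * (u - v)) ∧
    v₁ = u + s * (p - q) / (s - t) ∧
    t₁ = 1 / s + (p - q) / (s * (u - v)) := by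
  subst hu hv hs ht hu₂ hv₁ hs₂ ht₁
  have hv₁ := H1.x₁₂_mul_x₂_eq hx hx12.symm (H1.symm hH1)
  have ht₁ := H1.x₁₂_div_x₂_eq hx hx12.symm (H1.symm hH1)
  rw [← neg_sub p q, ← neg_sub (x₁ / x), mul_neg, neg_div_neg_eq] at hv₁
  rw [← neg_sub p q, ← neg_sub (x₁ * x), mul_neg, neg_div_neg_eq] at ht₁
  exact ⟨H1.x₁₂_mul_x₂_eq hx hx12 hH1, H1.x₁₂_div_x₂_eq hx hx12 hH1, hv₁, ht₁⟩

/-- A solution of H1 yields, via u = x₁x, v = x₂x, s = x₁/x, t = x₂/x etc.,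
a solution of the mH1 system. -/
theorem stmt8 {K : Type*} [Field K] (p q x x₁ x₂ x₁₂ : K)
    (hx : x ≠ 0) (hx₁ : x₁ ≠ 0) (hx₂ : x₂ ≠ 0)
    (hx12 : x₁ ≠ x₂) (huv : x₁ * x ≠ x₂ * x)
    (hH1 : (x - x₁₂) * (x₁ - x₂) + p - q = 0)
    (u v s t u₂ v₁ s₂ t₁ : K)
    (hu : u = x₁ * x) (hv : v = x₂ * x) (hs : s = x₁ / x) (ht : t = x₂ / x)
    (hu₂ : u₂ = x₁₂ * x₂) (hv₁ : v₁ = x₁₂ * x₁)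
    (hs₂ : s₂ = x₁₂ / x₂) (ht₁ : t₁ = x₁₂ / x₁) :
    u₂ = v + t * (p - q) / (s - t) ∧
    s₂ = 1 / t + (p - q) / (t * (u - v)) ∧
    v₁ = u + s * (p - q) / (s - t) ∧
    t₁ = 1 / s + (p - q) / (s * (u - v)) :=
  stmt8_general p q x x₁ x₂ x₁₂ hx hx12 hH1 u v s t u₂ v₁ s₂ t₁ hu hv hs ht hu₂ hv₁ hs₂ ht₁
end

section
/- Conversely, if (u,s,v,t) satisfy u = x₁x, v = x₂x, s = x₁/x, t = x₂/x for some nonzero x, x₁, x₂ (so in particular tu = sv), and u₂, s₂, v₁, t₁ are given by the mH1 formulas, then the H1 equation (x − x₁₂)(x₁ − x₂) + p − q = 0 holds, where x₁₂ := s₂·x₂. -/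
/-! Substituting `t = x₂ / x` and `u - v = (x₁ - x₂) x` into the mH1 formula gives
`s₂ x₂ = x + (p - q) / (x₁ - x₂)`, which is the H1 equation solved for `x₁₂`. -/

theorem mH1_s₂_mul_eq {K : Type*} [Field K] {p q x x₁ x₂ : K}
    (hx : x ≠ 0) (hx₂ : x₂ ≠ 0) (hx₁₂ : x₁ ≠ x₂) :
    (1 / (x₂ / x) + (p - q) / (x₂ / x * (x₁ * x - x₂ * x))) * x₂ = x + (p - q) / (x₁ - x₂) := by
  have hsub : x₁ - x₂ ≠ 0 := sub_ne_zero.mpr hx₁₂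
  field_simp

theorem H1_of_eq_add_div {K : Type*} [Field K] {p q x x₁ x₂ : K} (hx₁₂ : x₁ ≠ x₂) :
    (x - (x + (p - q) / (x₁ - x₂))) * (x₁ - x₂) + p - q = 0 := by
  have hsub : x₁ - x₂ ≠ 0 := sub_ne_zero.mpr hx₁₂
  field_simp
  ring

theorem stmt9_general {K : Type*} [Field K] (p q x x₁ x₂ : K)
    (hx : x * x₁ * x₂ ≠ 0) (hx12 : x₁ ≠ x₂)
    (u v t s₂ x₁₂ : K)
    (hu : u = x₁ * x) (hv : v = x₂ * x) (ht : t = x₂ / x)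
    (hs₂ : s₂ = 1 / t + (p - q) / (t * (u - v)))
    (hx₁₂ : x₁₂ = s₂ * x₂) :
    (x - x₁₂) * (x₁ - x₂) + p - q = 0 := by
  have hx0 : x ≠ 0 := left_ne_zero_of_mul (left_ne_zero_of_mul hx)
  have hx₂ : x₂ ≠ 0 := right_ne_zero_of_mul hx
  subst hx₁₂ hs₂ hu hv ht
  rw [mH1_s₂_mul_eq hx0 hx₂ hx12]
  exact H1_of_eq_add_div hx12

/-- Conversely, if u = x₁x, v = x₂x, s = x₁/x, t = x₂/x and s₂ is given by the
mH1 formula, then x₁₂ := s₂·x₂ satisfies the H1 equation. -/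
theorem stmt9 {K : Type*} [Field K] (p q x x₁ x₂ : K)
    (hx : x * x₁ * x₂ ≠ 0) (hx12 : x₁ ≠ x₂) (huv : x₁ * x ≠ x₂ * x)
    (u v s t s₂ x₁₂ : K)
    (hu : u = x₁ * x) (hv : v = x₂ * x) (hs : s = x₁ / x) (ht : t = x₂ / x)
    (hs₂ : s₂ = 1 / t + (p - q) / (t * (u - v)))
    (hx₁₂ : x₁₂ = s₂ * x₂) :
    (x - x₁₂) * (x₁ - x₂) + p - q = 0 :=
  stmt9_general p q x x₁ x₂ hx hx12 u v t s₂ x₁₂ hu hv ht hs₂ hx₁₂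
end

section
/- The Yang-Baxter map a^cH1 satisfies the braid/Yang-Baxter relation R₁₂∘R₁₃∘R₂₃ = R₂₃∘R₁₃∘R₁₂ on generic triples ((x₁,y₁,α₁),(x₂,y₂,α₂),(x₃,y₃,α₃)). -/
/-- The a^cH1 Yang-Baxter map acting on two points with parameters.
A point is a triple (x, y, α). -/
noncomputable def acH1 {K : Type*} [Field K] (a b : K × K × K) :
    (K × K × K) × (K × K × K) :=
  ((b.1 - (a.2.2 - b.2.2) / (a.2.1 + b.2.1),
    b.2.1 - (a.2.2 - b.2.2) / (a.1 - b.1), a.2.2),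
   (a.1 - (a.2.2 - b.2.2) / (a.2.1 + b.2.1),
    a.2.1 + (a.2.2 - b.2.2) / (a.1 - b.1), b.2.2))

noncomputable def R12 {K : Type*} [Field K]
    (w : (K × K × K) × (K × K × K) × (K × K × K)) :
    (K × K × K) × (K × K × K) × (K × K × K) :=
  ((acH1 w.1 w.2.1).1, (acH1 w.1 w.2.1).2, w.2.2)

noncomputable def R13 {K : Type*} [Field K]
    (w : (K × K × K) × (K × K × K) × (K × K × K)) :
    (K × K × K) × (K × K × K) × (K × K × K) :=
  ((acH1 w.1 w.2.2).1, w.2.1, (acH1 w.1 w.2.2).2)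

noncomputable def R23 {K : Type*} [Field K]
    (w : (K × K × K) × (K × K × K) × (K × K × K)) :
    (K × K × K) × (K × K × K) × (K × K × K) :=
  (w.1, (acH1 w.2.1 w.2.2).1, (acH1 w.2.1 w.2.2).2)

/-- The denominators appearing in one application of the map are nonzero. -/
def denomOK {K : Type*} [Field K] (a b : K × K × K) : Prop :=
  a.2.1 + b.2.1 ≠ 0 ∧ a.1 - b.1 ≠ 0

/-! Both sides move each x-coordinate by a sum of shifts `(αᵢ - αⱼ) / (y-sum)` and each
y-coordinate by a sum of shifts `(αᵢ - αⱼ) / (x-difference)`, every denominator being altered by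
the shifts made before it. Comparing slot by slot, the relation reduces to four instances of
`braid_shift_add`: two with the roles of x and y exchanged, two with the parameter differences
negated. -/

theorem braid_shift_add {K : Type*} [Field K] {X Y a b : K} (hX : X ≠ 0) (hY : Y ≠ 0)
    (hXa : X + a / Y ≠ 0) (hYb : Y - b / X ≠ 0) :
    a / Y + b / (Y - (a + b) / (X + a / Y)) = (a + b) / (Y - b / X) := by
  have hXYa : X * Y + a ≠ 0 := fun h => hXa (by field_simp; linear_combination h)
  have hXYb : X * Y - b ≠ 0 := fun h => hYb (by field_simp; linear_combination h)
  have hXa' : X + a / Y = (X * Y + a) / Y := by field_simp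
  have hYb' : Y - b / X = (X * Y - b) / X := by field_simp
  have hden : Y - (a + b) / (X + a / Y) = Y * (X * Y - b) / (X * Y + a) := by
    rw [hXa', div_div_eq_mul_div, eq_div_iff hXYa, sub_mul, div_mul_cancel₀ _ hXYa]
    ring
  rw [hden, hYb', div_div_eq_mul_div, div_div_eq_mul_div,
    div_add_div _ _ hY (mul_ne_zero hY hXYb),
    div_eq_div_iff (mul_ne_zero hY (mul_ne_zero hY hXYb)) hXYb]
  ring

theorem stmt15_general {K : Type*} [Field K]
    (w : (K × K × K) × (K × K × K) × (K × K × K))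
    (h1 : denomOK w.2.1 w.2.2)
    (h2 : denomOK (R23 w).1 (R23 w).2.2)
    (h4 : denomOK w.1 w.2.1)
    (h5 : denomOK (R12 w).1 (R12 w).2.2) :
    R12 (R13 (R23 w)) = R23 (R13 (R12 w)) := by
  obtain ⟨⟨x1, y1, a1⟩, ⟨x2, y2, a2⟩, ⟨x3, y3, a3⟩⟩ := w
  obtain ⟨hY23, hX23⟩ := h1
  obtain ⟨hY13, hX13⟩ := h2
  obtain ⟨hY12, hX12⟩ := h4
  obtain ⟨hY13', hX13'⟩ := h5
  simp only [R12, R13, R23, acH1] at hY13 hX13 hY13' hX13' ⊢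
  have I1 := braid_shift_add (X := x1 - x2) (a := a2 - a3) (b := a1 - a2) hX12 hY23
    (ne_of_eq_of_ne (by ring) hX13) (ne_of_eq_of_ne (by ring) hY13')
  have I2 := braid_shift_add (X := y1 + y2) (a := a2 - a3) (b := a1 - a2) hY12 hX23
    (ne_of_eq_of_ne (by ring) hY13) (ne_of_eq_of_ne (by ring) hX13')
  have I3 := braid_shift_add (X := x2 - x3) (a := a2 - a1) (b := a3 - a2) hX23 hY12
    (ne_of_eq_of_ne (by ring) hX13') (ne_of_eq_of_ne (by ring) hY13)
  have I4 := braid_shift_add (X := y2 + y3) (a := a2 - a1) (b := a3 - a2) hY23 hX12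
    (ne_of_eq_of_ne (by ring) hY13') (ne_of_eq_of_ne (by ring) hX13)
  refine Prod.ext (Prod.ext ?_ (Prod.ext ?_ rfl))
    (Prod.ext (Prod.ext ?_ (Prod.ext ?_ rfl)) (Prod.ext ?_ (Prod.ext ?_ rfl)))
  · linear_combination -I1
  · linear_combination -I2
  · linear_combination -I1 - I3
  · linear_combination I2 - I4
  · linear_combination -I3
  · linear_combination I4

/-- The Yang-Baxter map a^cH1 satisfies the braid relation
R₁₂∘R₁₃∘R₂₃ = R₂₃∘R₁₃∘R₁₂ on generic triples. -/
theorem stmt15 {K : Type*} [Field K]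
    (w : (K × K × K) × (K × K × K) × (K × K × K))
    (h1 : denomOK w.2.1 w.2.2)
    (h2 : denomOK (R23 w).1 (R23 w).2.2)
    (h3 : denomOK (R13 (R23 w)).1 (R13 (R23 w)).2.1)
    (h4 : denomOK w.1 w.2.1)
    (h5 : denomOK (R12 w).1 (R12 w).2.2)
    (h6 : denomOK (R13 (R12 w)).2.1 (R13 (R12 w)).2.2) :
    R12 (R13 (R23 w)) = R23 (R13 (R12 w)) :=
  stmt15_general w h1 h2 h4 h5
end

section
/- If x and y solve double-H1, i.e. (x₁₂ − x)(y₁ − y₂) = p − q and (y₁₂ − y)(x₁ − x₂) = p − q on every elementary quadrilateral, then y satisfies the 5-point equation (p − q₋₂)/(y₋₂₁ − y) + (p₋₁ − q)/(y₋₁₂ − y) = (p − q)/(y₁₂ − y) + (p₋₁ − q₋₂)/(y₋₁₋₂ − y) on every 5-point stencil. -/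
/-!
Each double-H1 relation expresses the fraction `(p - q) / (y-diagonal)` of its quad as the
difference of `x` along the other diagonal. Around a vertex the four quads give
`xE - xS`, `xW - xN`, `xE - xN` and `xW - xS`, and the 5-point equation is the identity
`(xE - xS) + (xW - xN) = (xE - xN) + (xW - xS)`.
-/

/-- The local form of the 5-point equation: `x` is sampled at the four axial neighbours
`E, N, W, S` of a vertex, `y` at the vertex and its four diagonal neighbours, and `pW = p₋₁`,
`qS = q₋₂`. -/
theorem five_point_of_quad_relations {K : Type*} [Field K]
    {xE xN xW xS y yNE yNW ySE ySW p pW q qS : K}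
    (hSE : (xE - xS) * (ySE - y) = p - qS) (hNW : (xN - xW) * (y - yNW) = pW - q)
    (hNE : (yNE - y) * (xE - xN) = p - q) (hSW : (y - ySW) * (xS - xW) = pW - qS)
    (dSE : ySE - y ≠ 0) (dNW : yNW - y ≠ 0) (dNE : yNE - y ≠ 0) (dSW : ySW - y ≠ 0) :
    (p - qS) / (ySE - y) + (pW - q) / (yNW - y)
      = (p - q) / (yNE - y) + (pW - qS) / (ySW - y) := by
  have eSE : (p - qS) / (ySE - y) = xE - xS := (eq_div_of_mul_eq dSE hSE).symm
  have eNW : (pW - q) / (yNW - y) = xW - xN :=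
    (eq_div_of_mul_eq dNW (by linear_combination hNW)).symm
  have eNE : (p - q) / (yNE - y) = xE - xN :=
    (eq_div_of_mul_eq dNE (by linear_combination hNE)).symm
  have eSW : (pW - qS) / (ySW - y) = xW - xS :=
    (eq_div_of_mul_eq dSW (by linear_combination hSW)).symm
  rw [eSE, eNW, eNE, eSW]
  ring

/-- If x and y solve double-H1 on every elementary quadrilateral, then y
satisfies the 5-point equation
(p − q₋₂)/(y₋₂₁ − y) + (p₋₁ − q)/(y₋₁₂ − y)
  = (p − q)/(y₁₂ − y) + (p₋₁ − q₋₂)/(y₋₁₋₂ − y). -/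
theorem stmt17 {K : Type*} [Field K]
    (x y : ℤ → ℤ → K) (p q : ℤ → K)
    (h1 : ∀ m n : ℤ,
      (x (m + 1) (n + 1) - x m n) * (y (m + 1) n - y m (n + 1)) = p m - q n)
    (h2 : ∀ m n : ℤ,
      (y (m + 1) (n + 1) - y m n) * (x (m + 1) n - x m (n + 1)) = p m - q n)
    (hden : ∀ m n : ℤ,
      y (m + 1) (n - 1) - y m n ≠ 0 ∧ y (m - 1) (n + 1) - y m n ≠ 0 ∧
      y (m + 1) (n + 1) - y m n ≠ 0 ∧ y (m - 1) (n - 1) - y m n ≠ 0) :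
    ∀ m n : ℤ,
      (p m - q (n - 1)) / (y (m + 1) (n - 1) - y m n)
        + (p (m - 1) - q n) / (y (m - 1) (n + 1) - y m n)
      = (p m - q n) / (y (m + 1) (n + 1) - y m n)
        + (p (m - 1) - q (n - 1)) / (y (m - 1) (n - 1) - y m n) := by
  intro m n
  obtain ⟨dSE, dNW, dNE, dSW⟩ := hden m n
  have hSE := h1 m (n - 1)
  have hNW := h1 (m - 1) n
  have hSW := h2 (m - 1) (n - 1)
  simp only [sub_add_cancel] at hSE hNW hSW
  exact five_point_of_quad_relations hSE hNW (h2 m n) hSW dSE dNW dNE dSW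
end

section
/- Under the difference substitution h = x₁ − x₂, g = y₁ − y₂, solutions of double-H1 yield the non-potential system: h₁₂ − h = (p−q)/g₁ − (p−q)/g₂ and g₁₂ − g = (p−q)/h₁ − (p−q)/h₂. -/
/-! On the quads based at `(m+1, n)` and `(m, n+1)` the first double-H1 relation solves for the
diagonal differences of `x` as `(p - q) / g₁` and `(p - q) / g₂`, and these two diagonals telescope
to `h₁₂ - h`. The second equation is the same argument with the roles of `x` and `y` exchanged. -/

def crossDiff {K : Type*} [Sub K] (x : ℤ → ℤ → K) (m n : ℤ) : K :=
  x (m + 1) n - x m (n + 1)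

theorem crossDiff_add_one_add_one_sub {K : Type*} [Field K] {x y : ℤ → ℤ → K} {c : K}
    (hxy : ∀ m n : ℤ, (x (m + 1) (n + 1) - x m n) * crossDiff y m n = c) {m n : ℤ}
    (hy₁ : crossDiff y (m + 1) n ≠ 0) (hy₂ : crossDiff y m (n + 1) ≠ 0) :
    crossDiff x (m + 1) (n + 1) - crossDiff x m n
      = c / crossDiff y (m + 1) n - c / crossDiff y m (n + 1) := by
  rw [← eq_div_of_mul_eq hy₁ (hxy (m + 1) n), ← eq_div_of_mul_eq hy₂ (hxy m (n + 1))]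
  simp only [crossDiff]
  ring

/-- Under the substitution h = x₁ − x₂, g = y₁ − y₂, solutions of double-H1
yield the non-potential system
h₁₂ − h = (p−q)/g₁ − (p−q)/g₂ and g₁₂ − g = (p−q)/h₁ − (p−q)/h₂. -/
theorem stmt18 {K : Type*} [Field K]
    (x y : ℤ → ℤ → K) (p q : K)
    (h1 : ∀ m n : ℤ,
      (x (m + 1) (n + 1) - x m n) * (y (m + 1) n - y m (n + 1)) = p - q)
    (h2 : ∀ m n : ℤ,
      (y (m + 1) (n + 1) - y m n) * (x (m + 1) n - x m (n + 1)) = p - q)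
    (h g : ℤ → ℤ → K)
    (hh : ∀ m n : ℤ, h m n = x (m + 1) n - x m (n + 1))
    (hg : ∀ m n : ℤ, g m n = y (m + 1) n - y m (n + 1))
    (hnz : ∀ m n : ℤ,
      g (m + 1) n ≠ 0 ∧ g m (n + 1) ≠ 0 ∧ h (m + 1) n ≠ 0 ∧ h m (n + 1) ≠ 0) :
    ∀ m n : ℤ,
      h (m + 1) (n + 1) - h m n
          = (p - q) / g (m + 1) n - (p - q) / g m (n + 1) ∧
      g (m + 1) (n + 1) - g m n
          = (p - q) / h (m + 1) n - (p - q) / h m (n + 1) := by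
  obtain rfl : h = crossDiff x := funext₂ hh
  obtain rfl : g = crossDiff y := funext₂ hg
  intro m n
  obtain ⟨hg₁, hg₂, hh₁, hh₂⟩ := hnz m n
  exact ⟨crossDiff_add_one_add_one_sub h1 hg₁ hg₂, crossDiff_add_one_add_one_sub h2 hh₁ hh₂⟩
end
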